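/- Let η > 0, let p ∈ ℝ^K have positive coordinates summing to 1, and let ℓ ∈ ℝ^K satisfy η ℓ_i ≥ −3 for all i. Define q ∈ ℝ^K by q_i = p_i exp(−η ℓ_i), and let ψ(x) = (1/η) Σ_{i=1}^K x_i ln x_i with Bregman divergence D_ψ(x, y) = ψ(x) − ψ(y) − ⟨∇ψ(y), x − y⟩ = (1/η) Σ_i ( x_i ln(x_i/y_i) + y_i − x_i ). Then D_ψ(p, q) ≤ 2η Σ_{i=1}^K p_i ℓ_i². -/

import Mathlib

/-!
With `u = η ℓ_i`, the `i`-th summand of `D_ψ(p, q)` is `p_i (e^{-u} - 1 + u)`, so it suffices that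
`e^{-u} - 1 + u ≤ 2 u²` for `u ≥ -3`. For `u ≥ 0` this follows from `e^{-u} ≤ 1 / (1 + u)`; for
`-3 ≤ u ≤ 0` write `e^{-u} = (e^{-u/3})³` and use the cubic Taylor bound on `[0, 1]`.
-/

open Real Finset

lemma Real.exp_le_one_add_add_two_mul_sq {t : ℝ} (h0 : 0 ≤ t) (h3 : t ≤ 3) :
    exp t ≤ 1 + t + 2 * t ^ 2 := by
  obtain ⟨s, rfl⟩ : ∃ s, t = 3 * s := ⟨t / 3, by ring⟩
  have hs0 : 0 ≤ s := by linarith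
  have hs1 : s ≤ 1 := by linarith
  have hexp_s : exp s ≤ 1 + s + s ^ 2 / 2 + 2 / 9 * s ^ 3 := by
    have := exp_bound' hs0 hs1 (n := 3) (by norm_num)
    norm_num [sum_range_succ, Nat.factorial] at this
    linarith
  calc exp (3 * s) = exp s ^ 3 := by rw [← exp_nat_mul]; norm_num
    _ ≤ (1 + s + s ^ 2 / 2 + 2 / 9 * s ^ 3) ^ 3 := by gcongr
    _ ≤ 1 + 3 * s + 2 * (3 * s) ^ 2 := by
      nlinarith [sq_nonneg s, sq_nonneg (s - 1), pow_le_one₀ hs0 hs1 (n := 3),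
        mul_nonneg hs0 hs0, sq_nonneg (s * s), sq_nonneg (s * s * s)]

lemma Real.exp_neg_sub_one_add_le_two_mul_sq {u : ℝ} (hu : -3 ≤ u) :
    exp (-u) - 1 + u ≤ 2 * u ^ 2 := by
  rcases le_or_gt 0 u with hu0 | hu0
  · have hpos : 0 < u + 1 := by linarith
    have : exp (-u) ≤ (u + 1)⁻¹ := by
      rw [exp_neg]
      exact inv_anti₀ hpos (add_one_le_exp u)
    have : (u + 1)⁻¹ ≤ 1 - u + u ^ 2 := by
      rw [inv_le_iff_one_le_mul₀ hpos]
      nlinarith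
    nlinarith
  · have := exp_le_one_add_add_two_mul_sq (t := -u) (by linarith) (by linarith)
    nlinarith

lemma mul_log_div_add_sub_of_eq_mul_exp_neg {p q u : ℝ} (hp : 0 < p) (hq : q = p * exp (-u)) :
    p * log (p / q) + q - p = p * (exp (-u) - 1 + u) := by
  have : p / q = exp u := by
    rw [hq, exp_neg]
    field_simp
  rw [this, log_exp, hq]
  ring

theorem stmt_15_general (K : ℕ) (η : ℝ) (hη : 0 < η) (p ℓ : Fin K → ℝ)
    (hp : ∀ i, 0 < p i)
    (hℓ : ∀ i, -3 ≤ η * ℓ i)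
    (q : Fin K → ℝ) (hq : ∀ i, q i = p i * Real.exp (-η * ℓ i))
    (Dψ : (Fin K → ℝ) → (Fin K → ℝ) → ℝ)
    (hD : ∀ x y, Dψ x y = (1 / η) * ∑ i, (x i * Real.log (x i / y i) + y i - x i)) :
    Dψ p q ≤ 2 * η * ∑ i, p i * ℓ i ^ 2 := by
  have hterm : ∀ i, p i * log (p i / q i) + q i - p i
      = p i * (exp (-(η * ℓ i)) - 1 + η * ℓ i) := fun i =>
    mul_log_div_add_sub_of_eq_mul_exp_neg (hp i) (by rw [hq i, neg_mul])
  calc Dψ p q = (1 / η) * ∑ i, p i * (exp (-(η * ℓ i)) - 1 + η * ℓ i) := by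
        simp only [hD, hterm]
    _ ≤ (1 / η) * ∑ i, p i * (2 * (η * ℓ i) ^ 2) := by
        gcongr with i
        · exact (hp i).le
        · exact exp_neg_sub_one_add_le_two_mul_sq (hℓ i)
    _ = 2 * η * ∑ i, p i * ℓ i ^ 2 := by
        rw [mul_sum, mul_sum]
        refine sum_congr rfl fun i _ => ?_
        field_simp

/-- Entropy Bregman divergence stability bound: with `q_i = p_i exp(−η ℓ_i)` and
`D_ψ(x,y) = (1/η) Σ_i (x_i ln(x_i/y_i) + y_i − x_i)` (for `ψ(x) = (1/η) Σ x_i ln x_i`),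
if `η ℓ_i ≥ −3` for all `i` then `D_ψ(p, q) ≤ 2η Σ_i p_i ℓ_i²`. -/
theorem stmt_15 (K : ℕ) (η : ℝ) (hη : 0 < η) (p ℓ : Fin K → ℝ)
    (hp : ∀ i, 0 < p i) (hpsum : ∑ i, p i = 1)
    (hℓ : ∀ i, -3 ≤ η * ℓ i)
    (q : Fin K → ℝ) (hq : ∀ i, q i = p i * Real.exp (-η * ℓ i))
    (Dψ : (Fin K → ℝ) → (Fin K → ℝ) → ℝ)
    (hD : ∀ x y, Dψ x y = (1 / η) * ∑ i, (x i * Real.log (x i / y i) + y i - x i)) :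
    Dψ p q ≤ 2 * η * ∑ i, p i * ℓ i ^ 2 :=
  stmt_15_general K η hη p ℓ hp hℓ q hq Dψ hD
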